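/- Let p₁, p₂, p₃ be real numbers (candidate values for E[XY], E[YZ], E[XZ]). Then there exists a probability measure P on {−1,1}³ whose coordinate random variables X, Y, Z satisfy E[X] = E[Y] = E[Z] = 0, E[XY] = p₁, E[YZ] = p₂, and E[XZ] = p₃, if and only if −1 ≤ p₁ + p₂ + p₃ ≤ 1 + 2·min(p₁, p₂, p₃). -/

import Mathlib

/-!
If `P` has zero means, the odd moments drop out of `P s + P (-s)`, which equals
`(1 + x y p₁ + y z p₂ + x z p₃) / 4` for `s = (x, y, z)`. Hence the four such expressions (one per
pair `±s`) are nonnegative, and these four inequalities are just the two-sided bound unfolded.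
Conversely, when they hold, splitting each evenly between `s` and `-s`, i.e. taking the
distribution with `E[XYZ] = 0`, gives the required joint distribution.
-/

abbrev SignTriple : Type := ({-1, 1} : Finset ℝ) × ({-1, 1} : Finset ℝ) × ({-1, 1} : Finset ℝ)

namespace SignTriple

local notation "σ₋" => (⟨-1, by simp⟩ : ({-1, 1} : Finset ℝ))
local notation "σ₊" => (⟨1, by simp⟩ : ({-1, 1} : Finset ℝ))

theorem sum_signs {M : Type*} [AddCommMonoid M] (g : ({-1, 1} : Finset ℝ) → M) :
    ∑ x, g x = g σ₋ + g σ₊ := by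
  refine Fintype.sum_eq_add _ _ (by norm_num [Subtype.ext_iff]) fun ⟨x, hx⟩ hne => ?_
  simp only [Finset.mem_insert, Finset.mem_singleton] at hx
  rcases hx with rfl | rfl <;> simp at hne

theorem forall_signs {P : ({-1, 1} : Finset ℝ) → Prop} : (∀ x, P x) ↔ P σ₋ ∧ P σ₊ := by
  refine ⟨fun h => ⟨h _, h _⟩, fun ⟨hneg, hpos⟩ ⟨x, hx⟩ => ?_⟩
  simp only [Finset.mem_insert, Finset.mem_singleton] at hx
  rcases hx with rfl | rfl <;> assumption

theorem sum_eq {M : Type*} [AddCommMonoid M] (f : SignTriple → M) :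
    ∑ s, f s =
      f (σ₋, σ₋, σ₋) + f (σ₋, σ₋, σ₊) + f (σ₋, σ₊, σ₋) + f (σ₋, σ₊, σ₊) +
      f (σ₊, σ₋, σ₋) + f (σ₊, σ₋, σ₊) + f (σ₊, σ₊, σ₋) + f (σ₊, σ₊, σ₊) := by
  simp only [Fintype.sum_prod_type, sum_signs, add_assoc]

theorem forall_iff {P : SignTriple → Prop} :
    (∀ s, P s) ↔
      P (σ₋, σ₋, σ₋) ∧ P (σ₋, σ₋, σ₊) ∧ P (σ₋, σ₊, σ₋) ∧ P (σ₋, σ₊, σ₊) ∧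
      P (σ₊, σ₋, σ₋) ∧ P (σ₊, σ₋, σ₊) ∧ P (σ₊, σ₊, σ₋) ∧ P (σ₊, σ₊, σ₊) := by
  simp only [Prod.forall, forall_signs, and_assoc]

end SignTriple

def IsZeroMeanJoint (p₁ p₂ p₃ : ℝ) (p : SignTriple → ℝ) : Prop :=
  (∀ s, 0 ≤ p s) ∧ (∑ s, p s = 1) ∧
    (∑ s, p s * (s.1 : ℝ)) = 0 ∧
    (∑ s, p s * (s.2.1 : ℝ)) = 0 ∧
    (∑ s, p s * (s.2.2 : ℝ)) = 0 ∧
    (∑ s, p s * ((s.1 : ℝ) * (s.2.1 : ℝ))) = p₁ ∧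
    (∑ s, p s * ((s.2.1 : ℝ) * (s.2.2 : ℝ))) = p₂ ∧
    (∑ s, p s * ((s.1 : ℝ) * (s.2.2 : ℝ))) = p₃

/-- `0 ≤ 1 + x y a + y z b + x z c` for `(x, y, z) = (1, 1, 1), (1, 1, -1), (-1, 1, 1), (1, -1, 1)`. -/
def CorrelationBounds (a b c : ℝ) : Prop :=
  0 ≤ 1 + a + b + c ∧ 0 ≤ 1 + a - b - c ∧ 0 ≤ 1 - a + b - c ∧ 0 ≤ 1 - a - b + c

theorem sum_bounds_iff_correlationBounds (a b c : ℝ) :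
    (-1 ≤ a + b + c ∧ a + b + c ≤ 1 + 2 * min a (min b c)) ↔ CorrelationBounds a b c := by
  have halve : a + b + c ≤ 1 + 2 * min a (min b c) ↔ (a + b + c - 1) / 2 ≤ min a (min b c) := by
    constructor <;> intro <;> linarith
  rw [halve, le_min_iff, le_min_iff, CorrelationBounds]
  constructor
  · rintro ⟨h, h₁, h₂, h₃⟩
    refine ⟨?_, ?_, ?_, ?_⟩ <;> linarith
  · rintro ⟨h, h₁, h₂, h₃⟩
    refine ⟨?_, ?_, ?_, ?_⟩ <;> linarith

theorem IsZeroMeanJoint.correlationBounds {p₁ p₂ p₃ : ℝ} {p : SignTriple → ℝ}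
    (hp : IsZeroMeanJoint p₁ p₂ p₃ p) : CorrelationBounds p₁ p₂ p₃ := by
  obtain ⟨hnonneg, h1, hX, hY, hZ, hXY, hYZ, hXZ⟩ := hp
  simp only [SignTriple.sum_eq] at h1 hX hY hZ hXY hYZ hXZ
  norm_num at hX hY hZ hXY hYZ hXZ
  have hnonneg' := SignTriple.forall_iff.1 hnonneg
  refine ⟨?_, ?_, ?_, ?_⟩ <;> linarith

noncomputable def centeredJoint (p₁ p₂ p₃ : ℝ) (s : SignTriple) : ℝ :=
  (1 + s.1 * s.2.1 * p₁ + s.2.1 * s.2.2 * p₂ + s.1 * s.2.2 * p₃) / 8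

theorem isZeroMeanJoint_centeredJoint {p₁ p₂ p₃ : ℝ} (h : CorrelationBounds p₁ p₂ p₃) :
    IsZeroMeanJoint p₁ p₂ p₃ (centeredJoint p₁ p₂ p₃) := by
  obtain ⟨h₀, h₁, h₂, h₃⟩ := h
  refine ⟨SignTriple.forall_iff.2 ?_, ?_, ?_, ?_, ?_, ?_, ?_, ?_⟩
  · norm_num [centeredJoint]
    and_intros <;> linarith
  all_goals norm_num [SignTriple.sum_eq, centeredJoint] <;> ring

theorem suppes_zanotti_inequalities (p₁ p₂ p₃ : ℝ) :
    (∃ p : SignTriple → ℝ,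
      (∀ s, 0 ≤ p s) ∧ (∑ s, p s = 1) ∧
      (∑ s, p s * (s.1 : ℝ)) = 0 ∧
      (∑ s, p s * (s.2.1 : ℝ)) = 0 ∧
      (∑ s, p s * (s.2.2 : ℝ)) = 0 ∧
      (∑ s, p s * ((s.1 : ℝ) * (s.2.1 : ℝ))) = p₁ ∧
      (∑ s, p s * ((s.2.1 : ℝ) * (s.2.2 : ℝ))) = p₂ ∧
      (∑ s, p s * ((s.1 : ℝ) * (s.2.2 : ℝ))) = p₃) ↔
    (-1 ≤ p₁ + p₂ + p₃ ∧ p₁ + p₂ + p₃ ≤ 1 + 2 * min p₁ (min p₂ p₃)) := by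
  rw [sum_bounds_iff_correlationBounds]
  exact ⟨fun ⟨_, hp⟩ => IsZeroMeanJoint.correlationBounds hp,
    fun h => ⟨_, isZeroMeanJoint_centeredJoint h⟩⟩
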